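/- arXiv:2007.02377 — 3 statements merged into one kernel-verified Lean document; each statement's English description precedes it below -/
import Mathlib

section
/- In the graph G, every vertex subset S minimizing the quotient over all ∅≠S⊊V, and every S minimizing the sparsity over all ∅≠S⊊V, separates u from v (i.e., exactly one of u,v lies in S); moreover its cut contains none of the edges e_A, e_B, e_C and contains exactly one edge from each of the paths P_A, P_B, P_C. -/
/-!
Compare an optimal `S` with `vSide = {v, v_{a_i}, v_{b_i}}`, whose cut is the last edge of each
path: it costs at most `3(β + T)` and its sides weigh `13n` and `11n`. Optimality against it keeps
the cost of `S` below `4β`. If `S` did not separate `u` from `v`, one side would avoid both heavy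
vertices and weigh at most `3n`, while the path through a vertex on the other side is cut twice,
costing at least `2β`; the resulting ratio loses to `vSide`. Once `u` and `v` are separated, each
of the three `u`–`v` paths is cut, and a budget below `4β` leaves room for neither a fourth cut
edge nor one of the edges `e_A, e_B, e_C`, each costing more than `4β`.
-/

open Finset

namespace SCLB

inductive V (n : ℕ) : Type
  | u : V n
  | v : V n
  | A : Fin n → V n
  | B : Fin n → V n
  | C : Fin n → V n
  deriving DecidableEq, Fintype

/-- Edges: `(p, some i)` is the `i`-th edge (0-indexed) on path `p` (`p = 0,1,2` for
`P_A, P_B, P_C`), joining the `(i+1)`-st path vertex to the next one; `(p, none)` is the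
special edge `e_A`, `e_B`, `e_C` respectively. -/
abbrev E (n : ℕ) := Fin 3 × Option (Fin n)

def Tsum (n : ℕ) (a b c : Fin n → ℕ) : ℕ := ∑ i, (a i + b i + c i)

def beta (n : ℕ) (a b c : Fin n → ℕ) : ℕ := 4 * Tsum n a b c * n ^ 2

def firstV {n : ℕ} (f : Fin n → V n) (dflt : V n) : V n :=
  if h : 0 < n then f ⟨0, h⟩ else dflt

def nextV {n : ℕ} (f : Fin n → V n) (top : V n) (i : Fin n) : V n :=
  if h : i.val + 1 < n then f ⟨i.val + 1, h⟩ else top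

def ends (n : ℕ) : E n → V n × V n
  | (p, none) =>
      if p = 0 then (V.v, firstV V.A V.u)
      else if p = 1 then (V.v, firstV V.B V.u)
      else (V.u, firstV V.C V.v)
  | (p, some i) =>
      if p = 0 then (V.A i, nextV V.A V.u i)
      else if p = 1 then (V.B i, nextV V.B V.u i)
      else (V.C i, nextV V.C V.v i)

def ecost (n : ℕ) (a b c : Fin n → ℕ) : E n → ℚ
  | (_, none) => 1210 * (n : ℚ) ^ 2 * (2 * (beta n a b c : ℚ) + (Tsum n a b c : ℚ))
  | (p, some i) =>
      if p = 0 then (beta n a b c : ℚ) + (a i : ℚ)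
      else if p = 1 then (beta n a b c : ℚ) + (b i : ℚ)
      else (beta n a b c : ℚ) + (Tsum n a b c : ℚ) - (c i : ℚ)

def wt (n : ℕ) : V n → ℚ
  | V.u => 10 * n
  | V.v => 11 * n
  | _ => 1

def cut (n : ℕ) (S : Finset (V n)) : Finset (E n) :=
  Finset.univ.filter fun e => ¬(((ends n e).1 ∈ S) ↔ ((ends n e).2 ∈ S))

def cutCost (n : ℕ) (a b c : Fin n → ℕ) (S : Finset (V n)) : ℚ :=
  ∑ e ∈ cut n S, ecost n a b c e

def wOf (n : ℕ) (S : Finset (V n)) : ℚ := ∑ x ∈ S, wt n x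

def quotientVal (n : ℕ) (a b c : Fin n → ℕ) (S : Finset (V n)) : ℚ :=
  cutCost n a b c S / min (wOf n S) (wOf n Sᶜ)

def sparsity (n : ℕ) (a b c : Fin n → ℕ) (S : Finset (V n)) : ℚ :=
  cutCost n a b c S / (wOf n S * wOf n Sᶜ)

def IsBisection (n : ℕ) (S : Finset (V n)) : Prop :=
  wOf n S = 12 * n ∧ wOf n Sᶜ = 12 * n

def PA (n : ℕ) : Finset (E n) := Finset.univ.filter fun e => e.1 = 0
def PB (n : ℕ) : Finset (E n) := Finset.univ.filter fun e => e.1 = 1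
def PC (n : ℕ) : Finset (E n) := Finset.univ.filter fun e => e.1 = 2

def GoodCut (n : ℕ) (S : Finset (V n)) : Prop :=
  ((V.u ∈ S) ↔ (V.v ∉ S))
  ∧ (((0 : Fin 3), (none : Option (Fin n))) ∉ cut n S
      ∧ ((1 : Fin 3), (none : Option (Fin n))) ∉ cut n S
      ∧ ((2 : Fin 3), (none : Option (Fin n))) ∉ cut n S)
  ∧ ((cut n S ∩ PA n).card = 1 ∧ (cut n S ∩ PB n).card = 1 ∧ (cut n S ∩ PC n).card = 1)

theorem exists_not_iff_succ_of_not_iff {P : ℕ → Prop} {j m : ℕ} (hjm : j ≤ m)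
    (h : ¬(P j ↔ P m)) : ∃ i, j ≤ i ∧ i < m ∧ ¬(P i ↔ P (i + 1)) := by
  contrapose! h
  induction m, hjm using Nat.le_induction with
  | base => rfl
  | succ m hjm ih =>
    rw [ih fun i hji him => h i hji (by omega)]
    exact h m hjm (by omega)

section Paths

variable {n : ℕ}

def pathVertex (n : ℕ) (p : Fin 3) : ℕ → V n
  | 0 => if p = 2 then V.u else V.v
  | k + 1 =>
    if h : k < n then
      if p = 0 then V.A ⟨k, h⟩ else if p = 1 then V.B ⟨k, h⟩ else V.C ⟨k, h⟩
    else if p = 2 then V.v else V.u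

def pathEdges (n : ℕ) (p : Fin 3) : Finset (E n) := univ.filter fun e => e.1 = p

theorem ends_finSuccEquiv (hn : 0 < n) (p : Fin 3) (k : Fin (n + 1)) :
    ends n (p, finSuccEquiv n k) = (pathVertex n p k, pathVertex n p (k + 1)) := by
  cases k using Fin.cases with
  | zero => fin_cases p <;> simp [ends, pathVertex, firstV, hn]
  | succ i => fin_cases p <;> simp [ends, pathVertex, nextV, i.isLt]

theorem pathVertex_zero_mem_iff_top_mem (S : Finset (V n)) (p : Fin 3) :
    (pathVertex n p 0 ∈ S ↔ pathVertex n p (n + 1) ∈ S) ↔ (V.u ∈ S ↔ V.v ∈ S) := by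
  fin_cases p <;> simp [pathVertex] <;> tauto

theorem exists_pathVertex_eq {x : V n} (hu : x ≠ V.u) (hv : x ≠ V.v) :
    ∃ p : Fin 3, ∃ k < n, pathVertex n p (k + 1) = x := by
  cases x with
  | u => exact absurd rfl hu
  | v => exact absurd rfl hv
  | A i => exact ⟨0, i, i.isLt, by simp [pathVertex]⟩
  | B i => exact ⟨1, i, i.isLt, by simp [pathVertex]⟩
  | C i => exact ⟨2, i, i.isLt, by simp [pathVertex]⟩

theorem exists_mem_cut_of_not_iff (hn : 0 < n) {S : Finset (V n)} {p : Fin 3} {j m : ℕ}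
    (hjm : j ≤ m) (hm : m ≤ n + 1) (h : ¬(pathVertex n p j ∈ S ↔ pathVertex n p m ∈ S)) :
    ∃ k : Fin (n + 1), j ≤ k ∧ (k : ℕ) < m ∧
      (p, finSuccEquiv n k) ∈ cut n S ∩ pathEdges n p := by
  obtain ⟨i, hji, him, hi⟩ :=
    exists_not_iff_succ_of_not_iff (P := fun i => pathVertex n p i ∈ S) hjm h
  refine ⟨⟨i, by omega⟩, hji, him, ?_⟩
  simpa [cut, pathEdges, ends_finSuccEquiv hn] using hi

theorem one_le_card_cut_inter_pathEdges (hn : 0 < n) {S : Finset (V n)}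
    (hsep : ¬(V.u ∈ S ↔ V.v ∈ S)) (p : Fin 3) : 1 ≤ (cut n S ∩ pathEdges n p).card := by
  obtain ⟨k, -, -, hk⟩ := exists_mem_cut_of_not_iff hn (p := p) (Nat.zero_le _) le_rfl
    (by rwa [pathVertex_zero_mem_iff_top_mem])
  exact card_pos.mpr ⟨_, hk⟩

theorem two_le_card_cut (hn : 0 < n) {S : Finset (V n)} (hS : S.Nonempty) (hS' : S ≠ univ)
    (hsame : V.u ∈ S ↔ V.v ∈ S) : 2 ≤ (cut n S).card := by
  obtain ⟨x, hx⟩ : ∃ x, ¬(V.u ∈ S ↔ x ∈ S) := by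
    by_cases hu : V.u ∈ S
    · obtain ⟨x, -, hx⟩ := exists_of_ssubset (ssubset_univ_iff.mpr hS')
      exact ⟨x, by tauto⟩
    · obtain ⟨x, hx⟩ := hS
      exact ⟨x, by tauto⟩
  obtain ⟨p, k, hk, rfl⟩ := exists_pathVertex_eq (n := n) (x := x) (by rintro rfl; tauto)
    (by rintro rfl; tauto)
  have hends :
      (pathVertex n p 0 ∈ S ↔ V.u ∈ S) ∧ (pathVertex n p (n + 1) ∈ S ↔ V.u ∈ S) := by
    fin_cases p <;> simp [pathVertex] <;> tauto
  obtain ⟨k₁, -, hk₁, h₁⟩ := exists_mem_cut_of_not_iff hn (S := S) (p := p)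
    (Nat.zero_le (k + 1)) (by omega) (by tauto)
  obtain ⟨k₂, hk₂, -, h₂⟩ := exists_mem_cut_of_not_iff hn (S := S) (p := p)
    (j := k + 1) (m := n + 1) (by omega) le_rfl (by tauto)
  refine one_lt_card.mpr ⟨_, inter_subset_left h₁, _, inter_subset_left h₂, ?_⟩
  simp only [ne_eq, Prod.mk.injEq, true_and, EmbeddingLike.apply_eq_iff_eq]
  exact fun h => by omega

theorem card_cut_eq_sum (S : Finset (V n)) :
    (cut n S).card = ∑ p : Fin 3, (cut n S ∩ pathEdges n p).card := by
  rw [card_eq_sum_card_fiberwise (f := Prod.fst) (t := univ) (by simp)]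
  simp [pathEdges, inter_filter]

end Paths

section Weights

variable {n : ℕ}

def equivSum (n : ℕ) : V n ≃ Bool ⊕ Fin n ⊕ Fin n ⊕ Fin n where
  toFun
    | V.u => .inl true
    | V.v => .inl false
    | V.A i => .inr (.inl i)
    | V.B i => .inr (.inr (.inl i))
    | V.C i => .inr (.inr (.inr i))
  invFun
    | .inl true => V.u
    | .inl false => V.v
    | .inr (.inl i) => V.A i
    | .inr (.inr (.inl i)) => V.B i
    | .inr (.inr (.inr i)) => V.C i
  left_inv := by rintro (_ | _ | i | i | i) <;> rfl
  right_inv := by rintro ((_ | _) | i | i | i) <;> rfl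

theorem sum_V {M : Type*} [AddCommMonoid M] (f : V n → M) :
    ∑ x, f x = f V.u + f V.v + ∑ i, f (V.A i) + ∑ i, f (V.B i) + ∑ i, f (V.C i) := by
  rw [← (equivSum n).symm.sum_comp]
  simp [Fintype.sum_sum_type, equivSum, add_assoc, add_comm (f V.u)]

theorem wOf_univ : wOf n univ = 24 * n := by
  rw [wOf, sum_V]
  simp only [wt, sum_const, card_univ, Fintype.card_fin, nsmul_eq_mul, mul_one]
  ring

theorem wOf_add_wOf_compl (S : Finset (V n)) : wOf n S + wOf n Sᶜ = 24 * n := by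
  rw [wOf, wOf, sum_add_sum_compl, ← wOf, wOf_univ]

theorem wt_nonneg (x : V n) : 0 ≤ wt n x := by
  cases x <;> simp [wt]

theorem one_le_wOf (hn : 0 < n) {S : Finset (V n)} (hS : S.Nonempty) : 1 ≤ wOf n S := by
  obtain ⟨x, hx⟩ := hS
  have hn : (1 : ℚ) ≤ n := by exact_mod_cast hn
  calc (1 : ℚ) ≤ wt n x := by cases x <;> simp [wt] <;> linarith
    _ ≤ wOf n S := single_le_sum (fun y _ => wt_nonneg y) hx

theorem one_le_wOf_compl (hn : 0 < n) {S : Finset (V n)} (hS : S ≠ univ) : 1 ≤ wOf n Sᶜ :=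
  one_le_wOf hn (by rwa [nonempty_iff_ne_empty, Ne, compl_eq_empty_iff])

theorem wOf_le_of_u_notMem_of_v_notMem {S : Finset (V n)} (hu : V.u ∉ S) (hv : V.v ∉ S) :
    wOf n S ≤ 3 * n := by
  have h := sum_le_univ_sum_of_nonneg (s := insert V.u (insert V.v S)) (f := wt n) wt_nonneg
  rw [sum_insert (by simp [hu]), sum_insert hv, ← wOf, ← wOf, wOf_univ] at h
  simp only [wt] at h
  linarith

theorem wOf_le_or_wOf_compl_le (S : Finset (V n)) (hsame : V.u ∈ S ↔ V.v ∈ S) :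
    wOf n S ≤ 3 * n ∨ wOf n Sᶜ ≤ 3 * n := by
  by_cases hu : V.u ∈ S
  · exact .inr (wOf_le_of_u_notMem_of_v_notMem (by simpa) (by simpa [← hsame]))
  · exact .inl (wOf_le_of_u_notMem_of_v_notMem hu (by rwa [← hsame]))

end Weights

section Costs

variable {n : ℕ} (a b c : Fin n → ℕ)

theorem add_add_le_Tsum (i : Fin n) : a i + b i + c i ≤ Tsum n a b c :=
  single_le_sum (f := fun j => a j + b j + c j) (fun _ _ => Nat.zero_le _) (mem_univ i)

theorem Tsum_pos (hn : 0 < n) (ha : ∀ i, 0 < a i) : 0 < Tsum n a b c :=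
  lt_of_lt_of_le (ha ⟨0, hn⟩) (by have := add_add_le_Tsum a b c ⟨0, hn⟩; omega)

theorem sixteen_mul_Tsum_le_beta (hn : 1 < n) : 16 * (Tsum n a b c : ℚ) ≤ beta n a b c := by
  have : 16 * Tsum n a b c ≤ beta n a b c := by
    have h4 : 4 ≤ n ^ 2 := by nlinarith
    rw [beta]
    nlinarith [Nat.mul_le_mul_left (4 * Tsum n a b c) h4]
  exact_mod_cast this

theorem four_mul_beta_le_ecost_none (hn : 0 < n) (p : Fin 3) :
    4 * (beta n a b c : ℚ) ≤ ecost n a b c (p, none) := by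
  have hn : (1 : ℚ) ≤ n ^ 2 := by exact_mod_cast Nat.one_le_pow _ _ hn
  simp only [ecost]
  nlinarith [(by positivity : (0 : ℚ) ≤ beta n a b c),
    (by positivity : (0 : ℚ) ≤ Tsum n a b c)]

theorem ecost_some_mem_Icc (p : Fin 3) (i : Fin n) :
    ecost n a b c (p, some i) ∈ Set.Icc (beta n a b c : ℚ) (beta n a b c + Tsum n a b c) := by
  have hi : ((a i + b i + c i : ℕ) : ℚ) ≤ Tsum n a b c := by
    exact_mod_cast add_add_le_Tsum a b c i
  push_cast at hi
  have := (Nat.cast_nonneg (α := ℚ) (a i))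
  have := (Nat.cast_nonneg (α := ℚ) (b i))
  have := (Nat.cast_nonneg (α := ℚ) (c i))
  simp only [ecost, Set.mem_Icc]
  split_ifs <;> constructor <;> linarith

theorem beta_le_ecost (hn : 0 < n) (e : E n) : (beta n a b c : ℚ) ≤ ecost n a b c e := by
  obtain ⟨p, _ | i⟩ := e
  · linarith [four_mul_beta_le_ecost_none a b c hn p, (by positivity : (0 : ℚ) ≤ beta n a b c)]
  · exact (ecost_some_mem_Icc a b c p i).1

theorem ecost_le_cutCost (hn : 0 < n) {S : Finset (V n)} {e : E n} (he : e ∈ cut n S) :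
    ecost n a b c e ≤ cutCost n a b c S :=
  single_le_sum (fun f _ => (Nat.cast_nonneg _).trans (beta_le_ecost a b c hn f)) he

theorem card_cut_mul_beta_le_cutCost (hn : 0 < n) (S : Finset (V n)) :
    (cut n S).card * (beta n a b c : ℚ) ≤ cutCost n a b c S := by
  rw [← nsmul_eq_mul, ← sum_const]
  exact sum_le_sum fun e _ => beta_le_ecost a b c hn e

end Costs

section Structure

variable {n : ℕ} (a b c : Fin n → ℕ)

theorem goodCut_of_cutCost_lt (hn : 0 < n) {S : Finset (V n)} (hsep : V.u ∈ S ↔ V.v ∉ S)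
    (hcost : cutCost n a b c S < 4 * beta n a b c) : GoodCut n S := by
  have hcard : (cut n S).card ≤ 3 := by
    by_contra! h
    have h4 : (4 : ℚ) ≤ (cut n S).card := by exact_mod_cast h
    nlinarith [card_cut_mul_beta_le_cutCost a b c hn S,
      (by positivity : (0 : ℚ) ≤ beta n a b c)]
  have hnone (p : Fin 3) : (p, none) ∉ cut n S := fun hp =>
    (four_mul_beta_le_ecost_none a b c hn p).not_gt
      ((ecost_le_cutCost a b c hn hp).trans_lt hcost)
  have hone := one_le_card_cut_inter_pathEdges hn (S := S) (by tauto)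
  have hA : 1 ≤ (cut n S ∩ PA n).card := hone 0
  have hB : 1 ≤ (cut n S ∩ PB n).card := hone 1
  have hC : 1 ≤ (cut n S ∩ PC n).card := hone 2
  have hsum : (cut n S).card
      = (cut n S ∩ PA n).card + (cut n S ∩ PB n).card + (cut n S ∩ PC n).card := by
    rw [card_cut_eq_sum, Fin.sum_univ_three]
    rfl
  exact ⟨hsep, ⟨hnone 0, hnone 1, hnone 2⟩, by omega, by omega, by omega⟩

end Structure

section VSide

variable {n : ℕ} (a b c : Fin n → ℕ)

def onVSide : V n → Bool
  | V.u => false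
  | V.v => true
  | V.A _ => true
  | V.B _ => true
  | V.C _ => false

def vSide (n : ℕ) : Finset (V n) := univ.filter fun x => onVSide x

theorem mem_vSide {x : V n} : x ∈ vSide n ↔ onVSide x = true := by
  simp [vSide]

theorem vSide_nonempty : (vSide n).Nonempty := ⟨V.v, by simp [mem_vSide, onVSide]⟩

theorem vSide_ne_univ : vSide n ≠ univ := by
  rw [Ne, eq_univ_iff_forall]
  exact fun h => by simpa [mem_vSide, onVSide] using h V.u

theorem wOf_vSide : wOf n (vSide n) = 13 * n := by
  rw [wOf, vSide, sum_filter, sum_V]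
  simp only [onVSide, Bool.false_eq_true, ↓reduceIte, wt, zero_add, sum_const, card_univ,
    Fintype.card_fin, nsmul_eq_mul, mul_one]
  ring

theorem wOf_compl_vSide : wOf n (vSide n)ᶜ = 11 * n := by
  linarith [wOf_add_wOf_compl (vSide n), wOf_vSide (n := n)]

theorem cut_vSide_subset (hn : 0 < n) {last : Fin n} (hlast : (last : ℕ) + 1 = n) :
    cut n (vSide n) ⊆ univ.image fun p : Fin 3 => (p, some last) := by
  rintro ⟨p, _ | i⟩ he
  · fin_cases p <;> simp [cut, ends, firstV, hn, mem_vSide, onVSide] at he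
  · obtain rfl : i = last := by
      by_contra hne
      have hlt : (i : ℕ) + 1 < n := by
        have : (i : ℕ) ≠ last := fun h => hne (Fin.ext h)
        omega
      fin_cases p <;> simp [cut, ends, nextV, hlt, mem_vSide, onVSide] at he
    simp

theorem cutCost_vSide_le (hn : 0 < n) :
    cutCost n a b c (vSide n) ≤ 3 * (beta n a b c + Tsum n a b c) := by
  obtain ⟨last, hlast⟩ : ∃ i : Fin n, (i : ℕ) + 1 = n :=
    ⟨⟨n - 1, by omega⟩, Nat.sub_add_cancel hn⟩
  have hcost_nonneg (e : E n) : 0 ≤ ecost n a b c e :=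
    (Nat.cast_nonneg _).trans (beta_le_ecost a b c hn e)
  calc cutCost n a b c (vSide n)
      ≤ ∑ e ∈ univ.image fun p : Fin 3 => (p, some last), ecost n a b c e :=
        sum_le_sum_of_subset_of_nonneg (cut_vSide_subset hn hlast) fun e _ _ => hcost_nonneg e
    _ ≤ ∑ p : Fin 3, ecost n a b c (p, some last) :=
        sum_image_le_of_nonneg fun e _ => hcost_nonneg e
    _ ≤ ∑ _p : Fin 3, ((beta n a b c : ℚ) + Tsum n a b c) :=
        sum_le_sum fun p _ => (ecost_some_mem_Icc a b c p last).2
    _ = 3 * (beta n a b c + Tsum n a b c) := by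
      simp only [sum_const, card_univ, Fintype.card_fin, nsmul_eq_mul, Nat.cast_ofNat]

end VSide

section Optimal

variable {n : ℕ} (a b c : Fin n → ℕ)

/-- `d`, `d₀` are the denominators of `S` and `vSide` (quotient: `d ≤ 12n`, `d₀ = 11n`, and
`d ≤ 3n` when `u`, `v` lie on one side; sparsity: `d ≤ 144n²`, `d₀ = 143n²`, resp. `d ≤ 72n²`). -/
theorem goodCut_of_cutCost_mul_le (hn : 1 < n) (hT : 0 < Tsum n a b c) {S : Finset (V n)}
    (hS : S.Nonempty) (hS' : S ≠ univ) {d d₀ : ℚ} (hd₀ : 0 < d₀) (hd : 0 ≤ d)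
    (hle : cutCost n a b c S * d₀ ≤ cutCost n a b c (vSide n) * d)
    (hd_le : 11 * d ≤ 12 * d₀) (hd_same : (V.u ∈ S ↔ V.v ∈ S) → 5 * d ≤ 3 * d₀) :
    GoodCut n S := by
  have hβ := sixteen_mul_Tsum_le_beta a b c hn
  have hT : (0 : ℚ) < Tsum n a b c := by exact_mod_cast hT
  have hvSide : cutCost n a b c S * d₀ ≤ 3 * (beta n a b c + Tsum n a b c) * d :=
    hle.trans (mul_le_mul_of_nonneg_right (cutCost_vSide_le a b c (by omega)) hd)
  have hsep : V.u ∈ S ↔ V.v ∉ S := by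
    by_contra h
    have hsame : V.u ∈ S ↔ V.v ∈ S := by tauto
    have h2 : (2 : ℚ) ≤ (cut n S).card := by
      exact_mod_cast two_le_card_cut (by omega) hS hS' hsame
    have hcost : 2 * (beta n a b c : ℚ) ≤ cutCost n a b c S :=
      (mul_le_mul_of_nonneg_right h2 (by positivity)).trans
        (card_cut_mul_beta_le_cutCost a b c (by omega) S)
    nlinarith [mul_le_mul_of_nonneg_left (hd_same hsame)
      (by positivity : (0 : ℚ) ≤ 3 * (beta n a b c + Tsum n a b c)),
      mul_le_mul_of_nonneg_right hcost hd₀.le, mul_pos hT hd₀]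
  refine goodCut_of_cutCost_lt a b c (by omega) hsep (lt_of_not_ge fun hcost => ?_)
  nlinarith [mul_le_mul_of_nonneg_left hd_le
      (by positivity : (0 : ℚ) ≤ 3 * (beta n a b c + Tsum n a b c)),
      mul_le_mul_of_nonneg_right hcost hd₀.le, mul_pos hT hd₀]

theorem goodCut_of_quotientVal_le (hn : 1 < n) (hT : 0 < Tsum n a b c) {S : Finset (V n)}
    (hS : S.Nonempty) (hS' : S ≠ univ)
    (hmin : quotientVal n a b c S ≤ quotientVal n a b c (vSide n)) : GoodCut n S := by
  have hw := wOf_add_wOf_compl S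
  have hd : 1 ≤ min (wOf n S) (wOf n Sᶜ) :=
    le_min (one_le_wOf (by omega) hS) (one_le_wOf_compl (by omega) hS')
  have hmin_left := min_le_left (wOf n S) (wOf n Sᶜ)
  have hmin_right := min_le_right (wOf n S) (wOf n Sᶜ)
  have hnq : (0 : ℚ) < n := by exact_mod_cast (by omega : 0 < n)
  rw [quotientVal, quotientVal, wOf_vSide, wOf_compl_vSide,
    min_eq_right (a := 13 * (n : ℚ)) (by linarith),
    div_le_div_iff₀ (by linarith) (by linarith)] at hmin
  refine goodCut_of_cutCost_mul_le a b c hn hT hS hS' (by linarith) (by linarith) hmin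
    (by linarith) fun hsame => ?_
  rcases wOf_le_or_wOf_compl_le S hsame with h | h <;> linarith

theorem goodCut_of_sparsity_le (hn : 1 < n) (hT : 0 < Tsum n a b c) {S : Finset (V n)}
    (hS : S.Nonempty) (hS' : S ≠ univ)
    (hmin : sparsity n a b c S ≤ sparsity n a b c (vSide n)) : GoodCut n S := by
  have hw := wOf_add_wOf_compl S
  have h₁ := one_le_wOf (by omega) hS
  have h₂ := one_le_wOf_compl (by omega) hS'
  have hnq : (0 : ℚ) < n := by exact_mod_cast (by omega : 0 < n)
  rw [sparsity, sparsity, wOf_vSide, wOf_compl_vSide,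
    div_le_div_iff₀ (by positivity) (by positivity)] at hmin
  refine goodCut_of_cutCost_mul_le a b c hn hT hS hS' (by positivity) (by positivity) hmin
    (by nlinarith [sq_nonneg (wOf n S - wOf n Sᶜ)]) fun hsame => ?_
  rcases wOf_le_or_wOf_compl_le S hsame with h | h <;> nlinarith

end Optimal

theorem min_quotient_and_sparsest_cut_structure_general (n : ℕ) (hn : 1 < n) (a b c : Fin n → ℕ)
    (ha : ∀ i, 0 < a i) :
    (∀ S : Finset (V n), S.Nonempty → S ≠ Finset.univ →
      (∀ S' : Finset (V n), S'.Nonempty → S' ≠ Finset.univ →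
        quotientVal n a b c S ≤ quotientVal n a b c S') →
      GoodCut n S)
    ∧ (∀ S : Finset (V n), S.Nonempty → S ≠ Finset.univ →
      (∀ S' : Finset (V n), S'.Nonempty → S' ≠ Finset.univ →
        sparsity n a b c S ≤ sparsity n a b c S') →
      GoodCut n S) := by
  have hT := Tsum_pos a b c (by omega) ha
  exact ⟨fun S hS hS' hmin => goodCut_of_quotientVal_le a b c hn hT hS hS'
      (hmin _ vSide_nonempty vSide_ne_univ),
    fun S hS hS' hmin => goodCut_of_sparsity_le a b c hn hT hS hS'
      (hmin _ vSide_nonempty vSide_ne_univ)⟩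

/-- Every minimum-quotient cut and every minimum-sparsity cut separates `u` from `v`,
avoids `e_A, e_B, e_C`, and cuts exactly one edge from each of `P_A, P_B, P_C`. -/
theorem min_quotient_and_sparsest_cut_structure (n : ℕ) (hn : 1 < n) (a b c : Fin n → ℕ)
    (ha : ∀ i, 0 < a i) (hb : ∀ i, 0 < b i) (hc : ∀ i, 0 < c i) :
    (∀ S : Finset (V n), S.Nonempty → S ≠ Finset.univ →
      (∀ S' : Finset (V n), S'.Nonempty → S' ≠ Finset.univ →
        quotientVal n a b c S ≤ quotientVal n a b c S') →
      GoodCut n S)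
    ∧ (∀ S : Finset (V n), S.Nonempty → S ≠ Finset.univ →
      (∀ S' : Finset (V n), S'.Nonempty → S' ≠ Finset.univ →
        sparsity n a b c S ≤ sparsity n a b c S') →
      GoodCut n S) :=
  min_quotient_and_sparsest_cut_structure_general n hn a b c ha

end SCLB
end

section
/- In the graph G, for all i,j∈{1,…,n} with i≠j, each of the weighted shortest-path distances d(a_i,b_j), d(a_i,a_j), and d(b_i,b_j) is at most (n+1)·M + 2. -/
open Finset

namespace DiamGadget

inductive V (n : ℕ) : Type
  | a : Fin n → V n
  | b : Fin n → V n
  | l : V n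
  | r : V n
  | l' : V n
  | r' : V n
  deriving DecidableEq, Fintype

def M : ℕ := 4

/-- One-directional edge-weight table encoding the instance `(A, B)`; a value `0` means
"no edge in this direction".  Here `i : Fin n` is 0-indexed, so `a i` is the paper's
`a_{i+1}`, whence the weights `(i+1)·M + A[i]` and `(n−i)·M + A[i]`. -/
def wt0 (n : ℕ) (A B : Fin n → Fin 2) : V n → V n → ℕ
  | V.l, V.l' => M
  | V.r, V.r' => M
  | V.a i, V.l => (i.val + 1) * M + (A i).val
  | V.a i, V.r => (n - i.val) * M + (A i).val
  | V.b i, V.l' => (n - i.val) * M + (B i).val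
  | V.b i, V.r' => (i.val + 1) * M + (B i).val
  | _, _ => 0

/-- The symmetrized edge weight. -/
def wtE (n : ℕ) (A B : Fin n → Fin 2) (x y : V n) : ℕ :=
  wt0 n A B x y + wt0 n A B y x

/-- The graph `G`: `x` and `y` are adjacent iff the weight table records an edge. -/
def G (n : ℕ) (A B : Fin n → Fin 2) : SimpleGraph (V n) :=
  SimpleGraph.fromRel fun x y => wt0 n A B x y ≠ 0

/-- The total weight of a walk. -/
def wWeight {n : ℕ} {A B : Fin n → Fin 2} {x y : V n} (p : (G n A B).Walk x y) : ℕ :=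
  (p.darts.map fun d => wtE n A B d.toProd.1 d.toProd.2).sum

/-- The weighted shortest-path distance: the minimum over paths from `x` to `y` of the sum
of the edge weights along the path. -/
noncomputable def dist (n : ℕ) (A B : Fin n → Fin 2) (x y : V n) : ℕ :=
  sInf {m | ∃ p : (G n A B).Walk x y, p.IsPath ∧ wWeight p = m}

/-- The weighted diameter: the maximum of `dist x y` over all pairs of vertices. -/
noncomputable def diam (n : ℕ) (A B : Fin n → Fin 2) : ℕ :=
  Finset.univ.sup fun p : V n × V n => dist n A B p.1 p.2

/-! Every off-diagonal pair is joined by a path through one side of the gadget, `ℓ – ℓ'` or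
`r – r'`. The edges from `a_i` to the hubs `ℓ` and `r` weigh `i·M` and `(n+1−i)·M` plus the bit
`A[i]`, so the two routes between `a_i` and `a_j` cost complementary multiples of `M`, summing to
`(2n+2)·M`, and the cheaper one is within `(n+1)·M + 2`; likewise for `b_i, b_j`. From `a_i` to
`b_j` the side `ℓ – ℓ'` costs `(n+2+i−j)·M + 2`, which suffices when `i < j`, and the side
`r – r'` serves `i > j` symmetrically. -/

section

open SimpleGraph (Walk fromRel_adj)

variable {n : ℕ} {A B : Fin n → Fin 2}

lemma wt0_self (x : V n) : wt0 n A B x x = 0 := by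
  cases x <;> rfl

lemma G_adj_of_wt0_ne_zero {x y : V n} (h : wt0 n A B x y ≠ 0) : (G n A B).Adj x y := by
  rw [G, fromRel_adj]
  exact ⟨by rintro rfl; exact h (wt0_self x), Or.inl h⟩

lemma adj_a_l (i : Fin n) : (G n A B).Adj (V.a i) V.l :=
  G_adj_of_wt0_ne_zero (by simp [wt0, M])

lemma adj_a_r (i : Fin n) : (G n A B).Adj (V.a i) V.r :=
  G_adj_of_wt0_ne_zero (by simp only [wt0, M]; omega)

lemma adj_b_l' (i : Fin n) : (G n A B).Adj (V.b i) V.l' :=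
  G_adj_of_wt0_ne_zero (by simp only [wt0, M]; omega)

lemma adj_b_r' (i : Fin n) : (G n A B).Adj (V.b i) V.r' :=
  G_adj_of_wt0_ne_zero (by simp [wt0, M])

lemma adj_l_l' : (G n A B).Adj V.l V.l' :=
  G_adj_of_wt0_ne_zero (by simp [wt0, M])

lemma adj_r_r' : (G n A B).Adj V.r V.r' :=
  G_adj_of_wt0_ne_zero (by simp [wt0, M])

@[simp]
lemma wWeight_nil (x : V n) : wWeight (Walk.nil : (G n A B).Walk x x) = 0 :=
  rfl

@[simp]
lemma wWeight_cons {x y z : V n} (h : (G n A B).Adj x y) (p : (G n A B).Walk y z) :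
    wWeight (Walk.cons h p) = wtE n A B x y + wWeight p := by
  simp [wWeight]

lemma dist_le_wWeight {x y : V n} (p : (G n A B).Walk x y) (hp : p.IsPath) :
    dist n A B x y ≤ wWeight p :=
  Nat.sInf_le ⟨p, hp, rfl⟩

lemma dist_le_of_adj_of_adj {x y z : V n} (hxy : (G n A B).Adj x y) (hyz : (G n A B).Adj y z)
    (hxz : x ≠ z) : dist n A B x z ≤ wtE n A B x y + wtE n A B y z := by
  refine (dist_le_wWeight (.cons hxy (.cons hyz .nil)) ?_).trans_eq (by simp)
  simp [Walk.isPath_def, hxy.ne, hyz.ne, hxz]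

lemma dist_le_of_adj_of_adj_of_adj {w x y z : V n} (hwx : (G n A B).Adj w x)
    (hxy : (G n A B).Adj x y) (hyz : (G n A B).Adj y z) (hwy : w ≠ y) (hwz : w ≠ z)
    (hxz : x ≠ z) :
    dist n A B w z ≤ wtE n A B w x + wtE n A B x y + wtE n A B y z := by
  refine (dist_le_wWeight (.cons hwx (.cons hxy (.cons hyz .nil))) ?_).trans_eq
    (by simp [add_assoc])
  simp [Walk.isPath_def, hwx.ne, hxy.ne, hyz.ne, hwy, hwz, hxz]

lemma dist_a_b_le {i j : Fin n} (hij : i ≠ j) :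
    dist n A B (V.a i) (V.b j) ≤ (n + 1) * M + 2 := by
  rcases lt_or_gt_of_ne hij with h | h
  · refine (dist_le_of_adj_of_adj_of_adj (adj_a_l i) adj_l_l' (adj_b_l' j).symm
      (by simp) (by simp) (by simp)).trans ?_
    simp only [wtE, wt0, M]
    omega
  · refine (dist_le_of_adj_of_adj_of_adj (adj_a_r i) adj_r_r' (adj_b_r' j).symm
      (by simp) (by simp) (by simp)).trans ?_
    simp only [wtE, wt0, M]
    omega

lemma dist_a_a_le {i j : Fin n} (hij : i ≠ j) :
    dist n A B (V.a i) (V.a j) ≤ (n + 1) * M + 2 := by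
  by_cases h : i.val + j.val + 1 ≤ n
  · refine (dist_le_of_adj_of_adj (adj_a_l i) (adj_a_l j).symm (by simpa)).trans ?_
    simp only [wtE, wt0, M]
    omega
  · refine (dist_le_of_adj_of_adj (adj_a_r i) (adj_a_r j).symm (by simpa)).trans ?_
    simp only [wtE, wt0, M]
    omega

lemma dist_b_b_le {i j : Fin n} (hij : i ≠ j) :
    dist n A B (V.b i) (V.b j) ≤ (n + 1) * M + 2 := by
  by_cases h : i.val + j.val + 1 ≤ n
  · refine (dist_le_of_adj_of_adj (adj_b_r' i) (adj_b_r' j).symm (by simpa)).trans ?_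
    simp only [wtE, wt0, M]
    omega
  · refine (dist_le_of_adj_of_adj (adj_b_l' i) (adj_b_l' j).symm (by simpa)).trans ?_
    simp only [wtE, wt0, M]
    omega

end

theorem dist_offdiag_le_general (n : ℕ) (A B : Fin n → Fin 2) (i j : Fin n)
    (hij : i ≠ j) :
    dist n A B (V.a i) (V.b j) ≤ (n + 1) * M + 2
    ∧ dist n A B (V.a i) (V.a j) ≤ (n + 1) * M + 2
    ∧ dist n A B (V.b i) (V.b j) ≤ (n + 1) * M + 2 :=
  ⟨dist_a_b_le hij, dist_a_a_le hij, dist_b_b_le hij⟩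

/-- For `i ≠ j`, each of `d(a_i, b_j)`, `d(a_i, a_j)`, `d(b_i, b_j)` is at most
`(n+1)·M + 2`. -/
theorem dist_offdiag_le (n : ℕ) (hn : 1 ≤ n) (A B : Fin n → Fin 2) (i j : Fin n)
    (hij : i ≠ j) :
    dist n A B (V.a i) (V.b j) ≤ (n + 1) * M + 2
    ∧ dist n A B (V.a i) (V.a j) ≤ (n + 1) * M + 2
    ∧ dist n A B (V.b i) (V.b j) ≤ (n + 1) * M + 2 :=
  dist_offdiag_le_general n A B i j hij

end DiamGadget
end

section
/- In the graph G, for all a≠b in {1,…,n} and all i,j∈{1,…,d}: d(u_{a,i}, u_{b,j}) = min(i+j, 4d+2−i−j)·M + v_a[i] + v_b[j], and d(u'_{a,i}, u'_{b,j}) = min(i+j, 4d+2−i−j)·M + v_a[i] + v_b[j]. -/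
open Finset

namespace OVGadget

inductive V (n d : ℕ) : Type
  | U : Fin n → Fin d → V n d
  | U' : Fin n → Fin d → V n d
  | l : V n d
  | r : V n d
  deriving DecidableEq, Fintype

def M : ℕ := 4

/-- One-directional edge-weight table encoding the vectors `v_1, …, v_n`; a value `0` means
"no edge".  Here `j : Fin d` is 0-indexed, so `U k j` is the paper's `u_{k+1, j+1}`, whence
the weights `(j+1)·M + v_k[j]` and `(2d+1−(j+1))·M + v_k[j] = (2d−j)·M + v_k[j]`. -/
def wt0 (n d : ℕ) (v : Fin n → Fin d → Fin 2) : V n d → V n d → ℕ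
  | V.U k j, V.l => (j.val + 1) * M + (v k j).val
  | V.U' k j, V.l => (2 * d - j.val) * M + (v k j).val
  | V.U k j, V.r => (2 * d - j.val) * M + (v k j).val
  | V.U' k j, V.r => (j.val + 1) * M + (v k j).val
  | _, _ => 0

/-- The symmetrized edge weight. -/
def wtE (n d : ℕ) (v : Fin n → Fin d → Fin 2) (x y : V n d) : ℕ :=
  wt0 n d v x y + wt0 n d v y x

/-- The graph `G`: `x` and `y` are adjacent iff the weight table records an edge. -/
def G (n d : ℕ) (v : Fin n → Fin d → Fin 2) : SimpleGraph (V n d) :=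
  SimpleGraph.fromRel fun x y => wt0 n d v x y ≠ 0

/-- The total weight of a walk. -/
def wWeight {n d : ℕ} {v : Fin n → Fin d → Fin 2} {x y : V n d}
    (p : (G n d v).Walk x y) : ℕ :=
  (p.darts.map fun e => wtE n d v e.toProd.1 e.toProd.2).sum

/-- The weighted shortest-path distance: the minimum over paths from `x` to `y` of the sum
of the edge weights along the path. -/
noncomputable def dist (n d : ℕ) (v : Fin n → Fin d → Fin 2) (x y : V n d) : ℕ :=
  sInf {m | ∃ p : (G n d v).Walk x y, p.IsPath ∧ wWeight p = m}

/-- Membership in the set `S_k = {u_{k,j}, u'_{k,j} : j}`. -/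
def inS (n d : ℕ) (k : Fin n) (x : V n d) : Prop :=
  (∃ j : Fin d, x = V.U k j) ∨ (∃ j : Fin d, x = V.U' k j)

/-- The set `S_k` as a finite set of vertices. -/
def SF (n d : ℕ) (k : Fin n) : Finset (V n d) :=
  (Finset.univ.image fun j : Fin d => V.U k j)
    ∪ (Finset.univ.image fun j : Fin d => V.U' k j)

/-- `Max-Dist(S_a, S_b) = max_{x ∈ S_a, y ∈ S_b} d(x, y)`. -/
noncomputable def maxDist (n d : ℕ) (v : Fin n → Fin d → Fin 2) (a b : Fin n) : ℕ :=
  (SF n d a ×ˢ SF n d b).sup fun p => dist n d v p.1 p.2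

/-! The graph is bipartite between the hubs `ℓ, r` and the vertices `u, u'`. For a target
vertex `y`, the candidate distances to `y` (the weight of the edge from a hub, the cheaper
two-edge path through a hub from any other vertex) form a feasible potential for the
shortest-path problem, so they bound the weight of every walk from below: the only critical
case is a detour `c – z – c'` between the two hubs, and it costs at least `(2d+1)·M`, more than
any single edge. The two-edge paths through a hub attain the bound. -/

theorem _root_.SimpleGraph.Walk.le_sum_of_potential {W R : Type*} [AddCommMonoid R]
    [PartialOrder R] [IsOrderedAddMonoid R] {H : SimpleGraph W} (w : W → W → R) (D : W → R)
    {s t : W} (p : H.Walk s t) (ht : D t = 0) (hD : ∀ x y, H.Adj x y → D x ≤ w x y + D y) :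
    D s ≤ (p.darts.map fun e => w e.toProd.1 e.toProd.2).sum := by
  induction p with
  | nil => simp [ht]
  | cons h p ih =>
    simpa using (hD _ _ h).trans (add_le_add_right (ih ht) _)

variable {n d : ℕ} {v : Fin n → Fin d → Fin 2}

def IsHub (x : V n d) : Prop := x = V.l ∨ x = V.r

@[simp] lemma isHub_l : IsHub (V.l : V n d) := Or.inl rfl
@[simp] lemma isHub_r : IsHub (V.r : V n d) := Or.inr rfl
@[simp] lemma not_isHub_U (k : Fin n) (j : Fin d) : ¬IsHub (V.U k j) := by simp [IsHub]
@[simp] lemma not_isHub_U' (k : Fin n) (j : Fin d) : ¬IsHub (V.U' k j) := by simp [IsHub]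

lemma adj_iff_isHub {x y : V n d} : (G n d v).Adj x y ↔ (IsHub x ↔ ¬IsHub y) := by
  rw [G, SimpleGraph.fromRel_adj]
  cases x <;> cases y <;> simp [wt0, M] <;> omega

lemma wtE_comm (x y : V n d) : wtE n d v x y = wtE n d v y x := Nat.add_comm _ _

lemma wtE_lt (x y : V n d) : wtE n d v x y < (2 * d + 1) * M := by
  cases x <;> cases y <;> simp [wtE, wt0, M] <;> omega

lemma le_wtE_l_add_wtE_r {x : V n d} (hx : ¬IsHub x) :
    (2 * d + 1) * M ≤ wtE n d v x V.l + wtE n d v x V.r := by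
  cases x <;> simp_all [wtE, wt0, M] <;> omega

def potential (v : Fin n → Fin d → Fin 2) (y : V n d) : V n d → ℕ
  | V.l => wtE n d v V.l y
  | V.r => wtE n d v V.r y
  | x => if x = y then 0 else
      min (wtE n d v x V.l + wtE n d v V.l y) (wtE n d v x V.r + wtE n d v V.r y)

lemma potential_of_not_isHub {x : V n d} (y : V n d) (hx : ¬IsHub x) :
    potential v y x = if x = y then 0 else
      min (wtE n d v x V.l + wtE n d v V.l y) (wtE n d v x V.r + wtE n d v V.r y) := by
  cases x <;> simp_all [potential]

lemma potential_le_wtE_add {y : V n d} (hy : ¬IsHub y) {x u : V n d} (hxu : (G n d v).Adj x u) :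
    potential v y x ≤ wtE n d v x u + potential v y u := by
  rw [adj_iff_isHub] at hxu
  by_cases hx : IsHub x
  · have hu := hxu.1 hx
    rw [potential_of_not_isHub y hu]
    split_ifs with huy
    · subst huy
      rcases hx with rfl | rfl <;> simp [potential]
    · have := le_wtE_l_add_wtE_r (v := v) hu
      have := wtE_lt (v := v) x y
      rw [wtE_comm x u]
      rcases hx with rfl | rfl <;> simp only [potential] <;> omega
  · rw [potential_of_not_isHub y hx]
    split_ifs
    · exact Nat.zero_le _
    · rcases not_not.mp (mt hxu.2 hx) with rfl | rfl
      · exact min_le_left _ _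
      · exact min_le_right _ _

lemma min_via_hubs_le_wWeight {x y : V n d} (hx : ¬IsHub x) (hy : ¬IsHub y) (hxy : x ≠ y)
    (p : (G n d v).Walk x y) :
    min (wtE n d v x V.l + wtE n d v V.l y) (wtE n d v x V.r + wtE n d v V.r y) ≤ wWeight p := by
  have h := p.le_sum_of_potential (wtE n d v) (potential v y)
    (by rw [potential_of_not_isHub y hy, if_pos rfl]) fun _ _ => potential_le_wtE_add hy
  rwa [potential_of_not_isHub y hx, if_neg hxy] at h

lemma exists_isPath_via_hub {x y c : V n d} (hx : ¬IsHub x) (hy : ¬IsHub y) (hxy : x ≠ y)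
    (hc : IsHub c) :
    ∃ p : (G n d v).Walk x y, p.IsPath ∧ wWeight p = wtE n d v x c + wtE n d v c y := by
  have hxc : (G n d v).Adj x c := adj_iff_isHub.mpr ⟨fun h => absurd h hx, fun h => absurd hc h⟩
  have hcy : (G n d v).Adj c y := adj_iff_isHub.mpr ⟨fun _ => hy, fun _ => hc⟩
  refine ⟨.cons hxc (.cons hcy .nil), ?_, by simp [wWeight]⟩
  have hcy' : c ≠ y := fun h => hy (h ▸ hc)
  have hxc' : x ≠ c := fun h => hx (h ▸ hc)
  simp [SimpleGraph.Walk.cons_isPath_iff, hcy', hxc', hxy]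

lemma dist_eq_min_via_hubs {x y : V n d} (hx : ¬IsHub x) (hy : ¬IsHub y) (hxy : x ≠ y) :
    dist n d v x y =
      min (wtE n d v x V.l + wtE n d v V.l y) (wtE n d v x V.r + wtE n d v V.r y) := by
  refine IsLeast.csInf_eq ⟨?_, ?_⟩
  · rcases min_choice (wtE n d v x V.l + wtE n d v V.l y) (wtE n d v x V.r + wtE n d v V.r y)
      with h | h <;> rw [h]
    · exact exists_isPath_via_hub hx hy hxy isHub_l
    · exact exists_isPath_via_hub hx hy hxy isHub_r
  · rintro _ ⟨p, -, rfl⟩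
    exact min_via_hubs_le_wWeight hx hy hxy p

theorem dist_unprimed_primed_pairs_general (n d : ℕ)
    (v : Fin n → Fin d → Fin 2) (a b : Fin n) (hab : a ≠ b) (i j : Fin d) :
    dist n d v (V.U a i) (V.U b j) =
      min (i.val + j.val + 2) (4 * d - i.val - j.val) * M + (v a i).val + (v b j).val
    ∧ dist n d v (V.U' a i) (V.U' b j) =
      min (i.val + j.val + 2) (4 * d - i.val - j.val) * M + (v a i).val + (v b j).val := by
  have hi := i.isLt
  have hj := j.isLt
  constructor <;>
  · rw [dist_eq_min_via_hubs (by simp) (by simp) (by simp [hab])]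
    simp only [wtE, wt0, M]
    omega

/-- For `a ≠ b` and 1-indexed coordinates `i, j`:
`d(u_{a,i}, u_{b,j}) = min(i+j, 4d+2−i−j)·M + v_a[i] + v_b[j]` and the same for the primed
vertices.  (With the 0-indexed `i, j : Fin d` used here, `min(i+j, 4d+2−i−j)` reads
`min (i+j+2) (4d−i−j)`.) -/
theorem dist_unprimed_primed_pairs (n d : ℕ) (hn : 2 ≤ n) (hd : 1 ≤ d)
    (v : Fin n → Fin d → Fin 2) (a b : Fin n) (hab : a ≠ b) (i j : Fin d) :
    dist n d v (V.U a i) (V.U b j) =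
      min (i.val + j.val + 2) (4 * d - i.val - j.val) * M + (v a i).val + (v b j).val
    ∧ dist n d v (V.U' a i) (V.U' b j) =
      min (i.val + j.val + 2) (4 * d - i.val - j.val) * M + (v a i).val + (v b j).val :=
  dist_unprimed_primed_pairs_general n d v a b hab i j

end OVGadget
end
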